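/- In the case K = 2: let U be a discrete random vector in ℝ² with finite support 𝒰, and let w* be a unit vector orthogonal to u₁ − u₂ for some distinct u₁, u₂ ∈ 𝒰 with P(U = u₁), P(U = u₂) > 0. Then there is a neighborhood 𝒲 of w* in the unit circle such that h(w·U) = h(U) > h(w*·U) for all w ∈ 𝒲 ∖ {w*}. -/

import Mathlib

/-!
If `w·u = w·u'` for distinct atoms, then `w ⟂ u - u'`. When `w*·(u - u') ≠ 0` this is excluded
near `w*` by continuity; when `w*·(u - u') = 0`, the unit vectors `w` and `w*` are both normal
to the same line of the plane, so `w = ±w*`. Hence every unit `w ≠ w*` close to `w*` is injective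
on the support and `w·U` has the entropy of `U`. At `w*` the atoms `u₁, u₂` merge, and merging
atoms strictly lowers entropy because `x ↦ x log x` is strictly superadditive on `(0, ∞)`.
-/

open MeasureTheory Real
open scoped Classical

/-- Discrete Shannon entropy of the projection `w·U`. -/
noncomputable def projEntropy (𝒰 : Finset (EuclideanSpace ℝ (Fin 2)))
    (P : EuclideanSpace ℝ (Fin 2) → ℝ) (w : EuclideanSpace ℝ (Fin 2)) : ℝ :=
  -∑ v ∈ 𝒰.image (fun u => (inner ℝ w u : ℝ)),
    (∑ u ∈ 𝒰.filter (fun u => (inner ℝ w u : ℝ) = v), P u) *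
      Real.log (∑ u ∈ 𝒰.filter (fun u => (inner ℝ w u : ℝ) = v), P u)

open Filter Topology Module

section Entropy

variable {α β : Type*} [DecidableEq β] {s : Finset α} {P : α → ℝ} {f : α → β}

noncomputable def pushforwardEntropy (s : Finset α) (P : α → ℝ) (f : α → β) : ℝ :=
  -∑ v ∈ s.image f, (∑ u ∈ s with f u = v, P u) * log (∑ u ∈ s with f u = v, P u)

theorem projEntropy_eq_pushforwardEntropy (𝒰 : Finset (EuclideanSpace ℝ (Fin 2)))
    (P : EuclideanSpace ℝ (Fin 2) → ℝ) (w : EuclideanSpace ℝ (Fin 2)) :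
    projEntropy 𝒰 P w = pushforwardEntropy 𝒰 P (inner ℝ w) :=
  rfl

theorem sum_mul_log_le_mul_log_sum (hP : ∀ u ∈ s, 0 ≤ P u) :
    ∑ u ∈ s, P u * log (P u) ≤ (∑ u ∈ s, P u) * log (∑ u ∈ s, P u) := by
  rw [Finset.sum_mul]
  refine Finset.sum_le_sum fun u hu => ?_
  rcases (hP u hu).eq_or_lt with h | h
  · simp [← h]
  · exact mul_le_mul_of_nonneg_left (log_le_log h (Finset.single_le_sum hP hu)) h.le

theorem sum_mul_log_lt_mul_log_sum (hP : ∀ u ∈ s, 0 < P u) {u₁ u₂ : α} (hu₁ : u₁ ∈ s)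
    (hu₂ : u₂ ∈ s) (hne : u₁ ≠ u₂) :
    ∑ u ∈ s, P u * log (P u) < (∑ u ∈ s, P u) * log (∑ u ∈ s, P u) := by
  have hP' : ∀ u ∈ s, 0 ≤ P u := fun u hu => (hP u hu).le
  rw [Finset.sum_mul]
  refine Finset.sum_lt_sum (fun u hu => ?_) ⟨u₁, hu₁, ?_⟩
  · exact mul_le_mul_of_nonneg_left (log_le_log (hP u hu) (Finset.single_le_sum hP' hu)) (hP' u hu)
  · have hlt : P u₁ < ∑ u ∈ s, P u :=
      calc P u₁ < P u₁ + P u₂ := lt_add_of_pos_right _ (hP u₂ hu₂)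
        _ = ∑ u ∈ {u₁, u₂}, P u := (Finset.sum_pair hne).symm
        _ ≤ ∑ u ∈ s, P u := Finset.sum_le_sum_of_subset_of_nonneg
          (Finset.insert_subset hu₁ (Finset.singleton_subset_iff.mpr hu₂)) fun x hx _ => hP' x hx
    exact mul_lt_mul_of_pos_left (log_lt_log (hP u₁ hu₁) hlt) (hP u₁ hu₁)

theorem pushforwardEntropy_eq_of_injOn (hf : Set.InjOn f s) :
    pushforwardEntropy s P f = -∑ u ∈ s, P u * log (P u) := by
  rw [pushforwardEntropy, Finset.sum_image hf]
  congr 1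
  refine Finset.sum_congr rfl fun u hu => ?_
  have hfiber : ∑ x ∈ s with f x = f u, P x = P u :=
    Finset.sum_eq_single_of_mem u (Finset.mem_filter.mpr ⟨hu, rfl⟩) fun x hx hxu =>
      absurd (hf (Finset.mem_filter.mp hx).1 hu (Finset.mem_filter.mp hx).2) hxu
  rw [hfiber]

theorem pushforwardEntropy_lt_of_not_injOn (hP : ∀ u ∈ s, 0 < P u) (hf : ¬Set.InjOn f s) :
    pushforwardEntropy s P f < -∑ u ∈ s, P u * log (P u) := by
  obtain ⟨u₁, hu₁, u₂, hu₂, hmerge, hne⟩ : ∃ u₁ ∈ s, ∃ u₂ ∈ s, f u₁ = f u₂ ∧ u₁ ≠ u₂ := by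
    simpa [Set.InjOn] using hf
  have hPfiber : ∀ v, ∀ u ∈ s.filter (f · = v), 0 < P u := fun v u hu =>
    hP u (Finset.mem_filter.mp hu).1
  rw [pushforwardEntropy, neg_lt_neg_iff,
    ← Finset.sum_fiberwise_of_maps_to fun u hu => Finset.mem_image_of_mem f hu]
  refine Finset.sum_lt_sum
    (fun v _ => sum_mul_log_le_mul_log_sum fun u hu => (hPfiber v u hu).le)
    ⟨f u₁, Finset.mem_image_of_mem f hu₁, sum_mul_log_lt_mul_log_sum (hPfiber _)
      (Finset.mem_filter.mpr ⟨hu₁, rfl⟩) (Finset.mem_filter.mpr ⟨hu₂, hmerge.symm⟩) hne⟩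

end Entropy

section Plane

variable {E : Type*} [NormedAddCommGroup E] [InnerProductSpace ℝ E]

theorem eq_or_eq_neg_of_inner_eq_zero (hE : finrank ℝ E = 2) {v w a : E} (hv : v ≠ 0)
    (hw : ‖w‖ = 1) (ha : ‖a‖ = 1) (hwv : inner ℝ w v = 0) (hav : inner ℝ a v = 0) :
    w = a ∨ w = -a := by
  have : Fact (finrank ℝ E = 1 + 1) := ⟨hE⟩
  have hwK : w ∈ (ℝ ∙ v)ᗮ := Submodule.mem_orthogonal_singleton_iff_inner_left.mpr hwv
  have haK : a ∈ (ℝ ∙ v)ᗮ := Submodule.mem_orthogonal_singleton_iff_inner_left.mpr hav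
  have ha0 : (⟨a, haK⟩ : (ℝ ∙ v)ᗮ) ≠ 0 := by
    simp [← norm_ne_zero_iff, ha]
  obtain ⟨c, hc⟩ := (finrank_eq_one_iff_of_nonzero' _ ha0).mp
    (Submodule.finrank_orthogonal_span_singleton hv) ⟨w, hwK⟩
  have hcw : c • a = w := congrArg Subtype.val hc
  have hc1 : |c| = 1 := by simpa [← hcw, norm_smul, ha] using hw
  rcases (abs_eq zero_le_one).mp hc1 with rfl | rfl
  · exact Or.inl (by simp [← hcw])
  · exact Or.inr (by simp [← hcw])

theorem eventually_injOn_inner (hE : finrank ℝ E = 2) (s : Finset E) {w₀ : E} (hw₀ : ‖w₀‖ = 1) :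
    ∀ᶠ w in 𝓝 w₀, ‖w‖ = 1 → w ≠ w₀ → Set.InjOn (inner ℝ w) s := by
  have hsep : ∀ᶠ w in 𝓝 w₀, ∀ u ∈ s, ∀ u' ∈ s,
      inner ℝ w₀ (u - u') ≠ 0 → inner ℝ w (u - u') ≠ (0 : ℝ) := by
    simp only [eventually_all_finset, eventually_imp_distrib_left]
    exact fun u _ u' _ h => (continuous_id.inner continuous_const).continuousAt.eventually_ne h
  have hneg : ∀ᶠ w in 𝓝 w₀, w ≠ -w₀ := eventually_ne_nhds fun h => by
    have h1 := congrArg (inner ℝ w₀) h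
    norm_num [hw₀] at h1
  filter_upwards [hsep, hneg] with w hsep hneg hw hne u hu u' hu' huu'
  by_contra hne'
  have hw0 : inner ℝ w (u - u') = (0 : ℝ) := by rw [inner_sub_right, huu', sub_self]
  have hw₀0 : inner ℝ w₀ (u - u') = (0 : ℝ) := by_contra fun h => hsep u hu u' hu' h hw0
  rcases eq_or_eq_neg_of_inner_eq_zero hE (sub_ne_zero.mpr hne') hw hw₀ hw0 hw₀0 with h | h
  · exact hne h
  · exact hneg h

end Plane

theorem discrete_entropy_local_minimum_two_dim_general
    (𝒰 : Finset (EuclideanSpace ℝ (Fin 2)))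
    (P : EuclideanSpace ℝ (Fin 2) → ℝ)
    (hPpos : ∀ u ∈ 𝒰, 0 < P u)
    (u₁ u₂ : EuclideanSpace ℝ (Fin 2)) (hu₁ : u₁ ∈ 𝒰) (hu₂ : u₂ ∈ 𝒰)
    (hne : u₁ ≠ u₂)
    (wstar : EuclideanSpace ℝ (Fin 2)) (hwstar : ‖wstar‖ = 1)
    (horth : (inner ℝ wstar (u₁ - u₂) : ℝ) = 0) :
    ∃ ε > (0:ℝ), ∀ w : EuclideanSpace ℝ (Fin 2),
      ‖w‖ = 1 → ‖w - wstar‖ < ε → w ≠ wstar →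
      projEntropy 𝒰 P w = -∑ u ∈ 𝒰, P u * Real.log (P u) ∧
      projEntropy 𝒰 P wstar < -∑ u ∈ 𝒰, P u * Real.log (P u) := by
  obtain ⟨ε, hε, hinj⟩ := Metric.eventually_nhds_iff.mp
    (eventually_injOn_inner finrank_euclideanSpace_fin 𝒰 hwstar)
  have hmerge : inner ℝ wstar u₁ = (inner ℝ wstar u₂ : ℝ) := by
    rwa [inner_sub_right, sub_eq_zero] at horth
  simp only [projEntropy_eq_pushforwardEntropy]
  refine ⟨ε, hε, fun w hw hdist hw' => ⟨?_, ?_⟩⟩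
  · exact pushforwardEntropy_eq_of_injOn (hinj (by rwa [dist_eq_norm]) hw hw')
  · exact pushforwardEntropy_lt_of_not_injOn hPpos fun h => hne (h hu₁ hu₂ hmerge)

/-- Case `K = 2` of Lemma 2: near a unit vector `w*` orthogonal to the difference
of two atoms, `h(w·U) = h(U) > h(w*·U)` for all `w ≠ w*` in a neighborhood. -/
theorem discrete_entropy_local_minimum_two_dim
    (𝒰 : Finset (EuclideanSpace ℝ (Fin 2)))
    (P : EuclideanSpace ℝ (Fin 2) → ℝ)
    (hPpos : ∀ u ∈ 𝒰, 0 < P u) (hPsum : ∑ u ∈ 𝒰, P u = 1)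
    (u₁ u₂ : EuclideanSpace ℝ (Fin 2)) (hu₁ : u₁ ∈ 𝒰) (hu₂ : u₂ ∈ 𝒰)
    (hne : u₁ ≠ u₂)
    (wstar : EuclideanSpace ℝ (Fin 2)) (hwstar : ‖wstar‖ = 1)
    (horth : (inner ℝ wstar (u₁ - u₂) : ℝ) = 0) :
    ∃ ε > (0:ℝ), ∀ w : EuclideanSpace ℝ (Fin 2),
      ‖w‖ = 1 → ‖w - wstar‖ < ε → w ≠ wstar →
      projEntropy 𝒰 P w = -∑ u ∈ 𝒰, P u * Real.log (P u) ∧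
      projEntropy 𝒰 P wstar < -∑ u ∈ 𝒰, P u * Real.log (P u) :=
  discrete_entropy_local_minimum_two_dim_general 𝒰 P hPpos u₁ u₂ hu₁ hu₂ hne wstar hwstar horth
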